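/- Suppose x* ∈ ℝⁿ, I = supp(Ψᵀx*), and there exist y ∈ ∂‖·‖₁(Ψᵀx*) and β ∈ ℝ^m with Ψy = Φᵀβ. Then for every δ > 0, λ > 0, and b with ‖Φx* − b‖₂ ≤ δ, every minimizer x of ‖Φx − b‖₂² + λ‖Ψᵀx‖₁ satisfies d_y(x, x*) ≤ (δ + λ‖β‖₂/2)²/λ and ‖Φx − b‖₂ ≤ δ + λ‖β‖₂. -/

import Mathlib

/-!
Testing the minimality of `x` against `xs` gives the basic inequality
`‖Φx - b‖² + λ d_y(x, xs) ≤ ‖Φxs - b‖² - λ ⟨Ψy, x - xs⟩`. The source condition `Ψy = Φᵀβ`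
turns the pairing into `⟨β, (Φx - b) - (Φxs - b)⟩`, which Cauchy–Schwarz bounds by
`‖β‖ (‖Φx - b‖ + ‖Φxs - b‖)`. Completing the square in `R = ‖Φx - b‖` yields
`(R - λ‖β‖/2)² + λ d_y(x, xs) ≤ (δ + λ‖β‖/2)²`, and both estimates follow since `d_y ≥ 0`.
-/

open Matrix

/-- ℓ₁ norm of a finite real vector. -/
noncomputable def l1 {k : ℕ} (v : Fin k → ℝ) : ℝ := ∑ i, |v i|

/-- ℓ₂ (Euclidean) norm of a finite real vector. -/
noncomputable def l2 {k : ℕ} (v : Fin k → ℝ) : ℝ := Real.sqrt (∑ i, (v i) ^ 2)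

/-- ℓ₁ norm of the subvector indexed by `S`. -/
noncomputable def l1S {k : ℕ} (S : Finset (Fin k)) (v : Fin k → ℝ) : ℝ := ∑ i ∈ S, |v i|

/-- ℓ₂ norm of the subvector indexed by `S`. -/
noncomputable def l2S {k : ℕ} (S : Finset (Fin k)) (v : Fin k → ℝ) : ℝ :=
  Real.sqrt (∑ i ∈ S, (v i) ^ 2)

/-- ℓ∞ norm of the subvector indexed by `S` (0 if `S` is empty). -/
noncomputable def linfS {k : ℕ} (S : Finset (Fin k)) (v : Fin k → ℝ) : ℝ := ⨆ i ∈ S, |v i|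

section Norms

variable {k : ℕ}

lemma l2_eq_norm_toLp (v : Fin k → ℝ) : l2 v = ‖WithLp.toLp 2 v‖ := by
  simp [EuclideanSpace.norm_eq, l2]

lemma l2_nonneg (v : Fin k → ℝ) : 0 ≤ l2 v := Real.sqrt_nonneg _

lemma l2_sub_le (v w : Fin k → ℝ) : l2 (v - w) ≤ l2 v + l2 w := by
  simpa only [l2_eq_norm_toLp, WithLp.toLp_sub] using norm_sub_le _ _

lemma abs_dotProduct_le_l2_mul_l2 (v w : Fin k → ℝ) : |v ⬝ᵥ w| ≤ l2 v * l2 w := by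
  simpa [l2_eq_norm_toLp, EuclideanSpace.inner_eq_star_dotProduct, dotProduct_comm w v]
    using abs_real_inner_le_norm (WithLp.toLp 2 v) (WithLp.toLp 2 w)

/-- `y ∈ ∂‖·‖₁(u)`. -/
def IsL1Subgradient (y u : Fin k → ℝ) : Prop :=
  ∀ i, (u i ≠ 0 → y i = Real.sign (u i)) ∧ |y i| ≤ 1

lemma dotProduct_le_l1 {y : Fin k → ℝ} (hy : ∀ i, |y i| ≤ 1) (v : Fin k → ℝ) :
    y ⬝ᵥ v ≤ l1 v :=
  Finset.sum_le_sum fun i _ => calc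
    y i * v i ≤ |y i| * |v i| := by rw [← abs_mul]; exact le_abs_self _
    _ ≤ |v i| := mul_le_of_le_one_left (abs_nonneg _) (hy i)

lemma IsL1Subgradient.dotProduct_eq_l1 {y u : Fin k → ℝ} (hy : IsL1Subgradient y u) :
    y ⬝ᵥ u = l1 u := by
  refine Finset.sum_congr rfl fun i _ => ?_
  rcases lt_trichotomy (u i) 0 with hneg | hzero | hpos
  · rw [(hy i).1 hneg.ne, Real.sign_of_neg hneg, abs_of_neg hneg]; ring
  · simp [hzero]
  · rw [(hy i).1 hpos.ne', Real.sign_of_pos hpos, abs_of_pos hpos]; ring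

end Norms

section Bregman

variable {m n l : ℕ}

/-- The paper's `d_y(x, xs)` is `bregmanL1 Ψ (Ψ *ᵥ y) x xs`. -/
noncomputable def bregmanL1 (Ψ : Matrix (Fin n) (Fin l) ℝ) (w x xs : Fin n → ℝ) : ℝ :=
  l1 (Ψᵀ *ᵥ x) - l1 (Ψᵀ *ᵥ xs) - w ⬝ᵥ (x - xs)

lemma bregmanL1_eq (Ψ : Matrix (Fin n) (Fin l) ℝ) (y : Fin l → ℝ) (x xs : Fin n → ℝ)
    (hy : IsL1Subgradient y (Ψᵀ *ᵥ xs)) :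
    bregmanL1 Ψ (Ψ *ᵥ y) x xs = l1 (Ψᵀ *ᵥ x) - y ⬝ᵥ (Ψᵀ *ᵥ x) := by
  have hpair : ∀ v, (Ψ *ᵥ y) ⬝ᵥ v = y ⬝ᵥ (Ψᵀ *ᵥ v) := fun v => by
    rw [dotProduct_comm, dotProduct_mulVec, mulVec_transpose, dotProduct_comm]
  rw [bregmanL1, dotProduct_sub, hpair, hpair, hy.dotProduct_eq_l1]
  ring

lemma bregmanL1_nonneg (Ψ : Matrix (Fin n) (Fin l) ℝ) (y : Fin l → ℝ) (x xs : Fin n → ℝ)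
    (hy : IsL1Subgradient y (Ψᵀ *ᵥ xs)) : 0 ≤ bregmanL1 Ψ (Ψ *ᵥ y) x xs := by
  rw [bregmanL1_eq Ψ y x xs hy]
  linarith [dotProduct_le_l1 (fun i => (hy i).2) (Ψᵀ *ᵥ x)]

noncomputable def lassoObjective (Φ : Matrix (Fin m) (Fin n) ℝ) (Ψ : Matrix (Fin n) (Fin l) ℝ)
    (b : Fin m → ℝ) (lam : ℝ) (x : Fin n → ℝ) : ℝ :=
  l2 (Φ *ᵥ x - b) ^ 2 + lam * l1 (Ψᵀ *ᵥ x)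

lemma sq_l2_add_mul_bregmanL1_le (Φ : Matrix (Fin m) (Fin n) ℝ) (Ψ : Matrix (Fin n) (Fin l) ℝ)
    {β : Fin m → ℝ} {w : Fin n → ℝ} (hβ : w = Φᵀ *ᵥ β) {b : Fin m → ℝ} {lam : ℝ}
    (hlam : 0 ≤ lam) {x xs : Fin n → ℝ}
    (hmin : lassoObjective Φ Ψ b lam x ≤ lassoObjective Φ Ψ b lam xs) :
    l2 (Φ *ᵥ x - b) ^ 2 + lam * bregmanL1 Ψ w x xs
      ≤ l2 (Φ *ᵥ xs - b) ^ 2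
        + lam * (l2 β * (l2 (Φ *ᵥ x - b) + l2 (Φ *ᵥ xs - b))) := by
  have hsource : w ⬝ᵥ (x - xs) = β ⬝ᵥ ((Φ *ᵥ x - b) - (Φ *ᵥ xs - b)) := by
    rw [sub_sub_sub_cancel_right, ← mulVec_sub, hβ, mulVec_transpose, dotProduct_mulVec]
  have hpair : -(l2 β * (l2 (Φ *ᵥ x - b) + l2 (Φ *ᵥ xs - b))) ≤ w ⬝ᵥ (x - xs) := by
    rw [hsource, neg_le]
    calc -(β ⬝ᵥ ((Φ *ᵥ x - b) - (Φ *ᵥ xs - b)))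
        ≤ l2 β * l2 ((Φ *ᵥ x - b) - (Φ *ᵥ xs - b)) :=
          (neg_le_abs _).trans (abs_dotProduct_le_l2_mul_l2 _ _)
      _ ≤ _ := mul_le_mul_of_nonneg_left (l2_sub_le _ _) (l2_nonneg β)
  unfold lassoObjective at hmin
  rw [bregmanL1]
  linarith [mul_le_mul_of_nonneg_left hpair hlam]

end Bregman

/-- Bregman distance and residual bounds for the lasso-type problem. -/
theorem stmt8 {m n l : ℕ} (Φ : Matrix (Fin m) (Fin n) ℝ) (Ψ : Matrix (Fin n) (Fin l) ℝ)
    (xs : Fin n → ℝ)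
    (y : Fin l → ℝ)
    (hy : ∀ i, (Ψ.transpose.mulVec xs i ≠ 0 → y i = Real.sign (Ψ.transpose.mulVec xs i))
      ∧ |y i| ≤ 1)
    (β : Fin m → ℝ) (hβ : Ψ.mulVec y = Φ.transpose.mulVec β) :
    ∀ δ lam : ℝ, 0 < δ → 0 < lam → ∀ b : Fin m → ℝ, l2 (Φ.mulVec xs - b) ≤ δ →
      ∀ x : Fin n → ℝ,
        (∀ z, (l2 (Φ.mulVec x - b)) ^ 2 + lam * l1 (Ψ.transpose.mulVec x)
          ≤ (l2 (Φ.mulVec z - b)) ^ 2 + lam * l1 (Ψ.transpose.mulVec z)) →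
        (l1 (Ψ.transpose.mulVec x) - l1 (Ψ.transpose.mulVec xs)
            - ∑ j, Ψ.mulVec y j * (x j - xs j) ≤ (δ + lam * l2 β / 2) ^ 2 / lam)
          ∧ l2 (Φ.mulVec x - b) ≤ δ + lam * l2 β := by
  intro δ lam _ hlam b hb x hmin
  show bregmanL1 Ψ (Ψ *ᵥ y) x xs ≤ _ ∧ _
  have hbasic := sq_l2_add_mul_bregmanL1_le Φ Ψ hβ hlam.le (hmin xs)
  have hD := mul_nonneg hlam.le (bregmanL1_nonneg Ψ y x xs hy)
  have hρ := l2_nonneg (Φ *ᵥ xs - b)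
  have hB := mul_nonneg hlam.le (l2_nonneg β)
  set D := bregmanL1 Ψ (Ψ *ᵥ y) x xs
  set R := l2 (Φ *ᵥ x - b)
  have hsq : (R - lam * l2 β / 2) ^ 2 + lam * D ≤ (δ + lam * l2 β / 2) ^ 2 := by
    nlinarith [mul_le_mul hb hb hρ (hρ.trans hb), mul_le_mul_of_nonneg_left hb hB]
  constructor
  · rw [le_div_iff₀ hlam]
    nlinarith [sq_nonneg (R - lam * l2 β / 2)]
  · have : |R - lam * l2 β / 2| ≤ δ + lam * l2 β / 2 :=
      abs_le_of_sq_le_sq (by linarith) (by positivity)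
    linarith [le_abs_self (R - lam * l2 β / 2)]
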